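/- arXiv:1806.00300 — 2 statements merged into one kernel-verified Lean document; each statement's English description precedes it below -/
import Mathlib

section
/- Let x be a local optimum of an instance of G*_ε with f(x) > 1/2 whose fuller machine contains at least one small job. Then one of the two machines contains at most s/2 − 1 large jobs and at least (n−s−1)/2 + p₁/p_{s+1} small jobs. -/
/-- The load of machine `b` under assignment `x` (job `i` is on machine `x i`). -/
noncomputable def load {n : ℕ} (p : Fin n → ℝ) (x : Fin n → Bool) (b : Bool) : ℝ :=
  ∑ i ∈ Finset.univ.filter (fun i => x i = b), p i

/-- The makespan of a solution `x` of the Partition instance with processing times `p`. -/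
noncomputable def makespan {n : ℕ} (p : Fin n → ℝ) (x : Fin n → Bool) : ℝ :=
  max (load p x false) (load p x true)

/-- `x` is a local optimum: no solution at Hamming distance 1 has strictly smaller makespan. -/
def IsLocalOpt {n : ℕ} (p : Fin n → ℝ) (x : Fin n → Bool) : Prop :=
  ∀ j : Fin n, ¬ makespan p (Function.update x j (!x j)) < makespan p x

/-- The processing times of the generalised worst-case instance class `G*_ε`
with `n` jobs and `s` large jobs (indices `0,…,s-1` are the large jobs). -/
noncomputable def gProc (n s : ℕ) (ε : ℝ) : Fin n → ℝ := fun i =>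
  if (i : ℕ) < s then 1 / (2 * (s : ℝ) - 1) - ε / (2 * s)
  else (((s : ℝ) - 1) / ((n : ℝ) - s)) * (1 / (2 * (s : ℝ) - 1) + ε / (2 * ((s : ℝ) - 1)))

/-!
Write `L = p₁`, `T = p_{s+1}`, `s = 2t` and `n - s = 2u`, so that `tL + uT = 1/2`.
Moving a small job off the fuller machine must not lower the makespan, so the fuller load is at
most `1/2 + T/2` and both loads lie in `[1/2 - T/2, 1/2 + T/2]`. The fuller machine cannot hold
exactly `t` large jobs, since its number of small jobs would be an integer in `(u, u + 1/2]`.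
Hence some machine holds at most `t - 1` large jobs, and a load of at least `1/2 - T/2` then
forces it to hold at least `u - 1/2 + L/T` small jobs.
-/

open Finset

section Loads

variable {n : ℕ} (p : Fin n → ℝ) (x : Fin n → Bool)

lemma makespan_eq_max_load_not (b : Bool) :
    makespan p x = max (load p x b) (load p x (!b)) := by
  cases b <;> simp [makespan, max_comm]

lemma load_update_add (i : Fin n) (c b : Bool) :
    load p (Function.update x i c) b + (if x i = b then p i else 0)
      = load p x b + (if c = b then p i else 0) := by
  simp only [load, sum_filter, ← add_sum_erase _ _ (mem_univ i), Function.update_self]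
  have hrest : ∑ j ∈ univ.erase i, (if Function.update x i c j = b then p j else 0)
      = ∑ j ∈ univ.erase i, (if x j = b then p j else 0) :=
    sum_congr rfl fun j hj => by rw [Function.update_of_ne (ne_of_mem_erase hj)]
  rw [hrest]
  ring

lemma load_update_not_self (i : Fin n) :
    load p (Function.update x i (!x i)) (x i) = load p x (x i) - p i := by
  have h := load_update_add p x i (!x i) (x i)
  simp only [Bool.not_ne_self, if_false, if_true] at h
  linarith

lemma load_update_not (i : Fin n) :
    load p (Function.update x i (!x i)) (!x i) = load p x (!x i) + p i := by
  have h := load_update_add p x i (!x i) (!x i)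
  simp only [Bool.self_ne_not, if_false, if_true] at h
  linarith

variable {p x} in
lemma IsLocalOpt.load_le_load_not_add (hlo : IsLocalOpt p x) {i : Fin n} (hpi : 0 < p i)
    (hfull : load p x (x i) = makespan p x) : load p x (x i) ≤ load p x (!x i) + p i := by
  have h := not_lt.mp (hlo i)
  rw [makespan_eq_max_load_not p (Function.update x i (!x i)) (x i), load_update_not_self,
    load_update_not, ← hfull, le_max_iff] at h
  rcases h with h | h
  · linarith
  · exact h

end Loads

lemma card_filter_eq_add_card_filter_eq_not {α : Type*} [Fintype α] (x : α → Bool) (b : Bool)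
    (P : α → Prop) [DecidablePred P] :
    #{i | x i = b ∧ P i} + #{i | x i = !b ∧ P i} = #{i | P i} := by
  rw [← card_filter_add_card_filter_not (s := {i | P i}) (fun i => x i = b), filter_filter,
    filter_filter]
  congr 3 <;> ext i <;> cases b <;> simp [and_comm]

lemma Fin.card_filter_le_val {n s : ℕ} (hsn : s ≤ n) : #{i : Fin n | s ≤ (i : ℕ)} = n - s := by
  have h := card_filter_add_card_filter_not (s := (univ : Finset (Fin n))) (fun i => (i : ℕ) < s)
  simp only [Fin.card_filter_val_lt, not_lt, card_univ, Fintype.card_fin] at h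
  omega

section GStar

variable (n s : ℕ) (ε : ℝ)

/-- `gLarge s ε` and `gSmall n s ε` are the processing times `p₁` and `p_{s+1}` of `G*_ε`. -/
noncomputable def gLarge : ℝ := 1 / (2 * (s : ℝ) - 1) - ε / (2 * s)

noncomputable def gSmall : ℝ :=
  (((s : ℝ) - 1) / ((n : ℝ) - s)) * (1 / (2 * (s : ℝ) - 1) + ε / (2 * ((s : ℝ) - 1)))

variable {n s}

lemma gProc_of_lt {i : Fin n} (hi : (i : ℕ) < s) : gProc n s ε i = gLarge s ε := if_pos hi

lemma gProc_of_le {i : Fin n} (hi : s ≤ (i : ℕ)) : gProc n s ε i = gSmall n s ε :=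
  if_neg (not_lt.mpr hi)

variable {ε}

lemma gLarge_pos (hs : 1 ≤ s) (hε0 : 0 ≤ ε) (hε1 : ε < 1 / (2 * (s : ℝ) - 1)) :
    0 < gLarge s ε := by
  have hsR : (1 : ℝ) ≤ s := by exact_mod_cast hs
  have : ε / (2 * s) ≤ ε := div_le_self hε0 (by linarith)
  unfold gLarge
  linarith

lemma gSmall_pos (h2s : 2 ≤ s) (hsn : s < n) (hε0 : 0 ≤ ε) : 0 < gSmall n s ε := by
  have hsR : (2 : ℝ) ≤ s := by exact_mod_cast h2s
  have hnR : (s : ℝ) < n := by exact_mod_cast hsn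
  unfold gSmall
  have : 0 ≤ ε / (2 * ((s : ℝ) - 1)) := div_nonneg hε0 (by linarith)
  have : 0 < 1 / (2 * (s : ℝ) - 1) := by apply div_pos <;> linarith
  have : 0 < ((s : ℝ) - 1) / ((n : ℝ) - s) := by apply div_pos <;> linarith
  positivity

lemma gLarge_mul_add_gSmall_mul (h2s : 2 ≤ s) (hsn : s < n) :
    s * gLarge s ε + (n - s) * gSmall n s ε = 1 := by
  have hsR : (2 : ℝ) ≤ s := by exact_mod_cast h2s
  have hnR : (s : ℝ) < n := by exact_mod_cast hsn
  have hq : (2 * (s : ℝ) - 1) * (1 / (2 * s - 1)) = 1 := mul_one_div_cancel (by linarith)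
  have hl : (s : ℝ) * (ε / (2 * s)) = ε / 2 := by field_simp
  have hr : ((s : ℝ) - 1) * (ε / (2 * (s - 1))) = ε / 2 := by
    have : (s : ℝ) - 1 ≠ 0 := by linarith
    field_simp
  unfold gLarge gSmall
  rw [← mul_assoc, mul_div_cancel₀ _ (by linarith)]
  linear_combination hq - hl + hr

lemma load_gProc (x : Fin n → Bool) (b : Bool) :
    load (gProc n s ε) x b =
      #{i | x i = b ∧ (i : ℕ) < s} * gLarge s ε + #{i | x i = b ∧ s ≤ (i : ℕ)} * gSmall n s ε := by
  rw [load, ← sum_filter_add_sum_filter_not _ (fun i : Fin n => (i : ℕ) < s), filter_filter,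
    filter_filter, sum_congr rfl fun i hi => gProc_of_lt ε (mem_filter.mp hi).2.2,
    sum_congr rfl fun i hi => gProc_of_le ε (not_lt.mp (mem_filter.mp hi).2.2)]
  simp only [sum_const, nsmul_eq_mul, not_lt]

end GStar

section TwoMachines

variable {L T : ℝ} {t u : ℕ}

lemma half_sub_le_card_small (hL : 0 ≤ L) (hT : 0 < T) {a m : ℕ} (ha : (a : ℝ) ≤ t - 1)
    (hload : t * L + u * T - T / 2 ≤ a * L + m * T) : (u : ℝ) - 1 / 2 + L / T ≤ m := by
  rw [← sub_nonneg, ← mul_le_mul_iff_left₀ hT, zero_mul, sub_mul, add_mul, div_mul_cancel₀ _ hT.ne']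
  nlinarith

/-- If `a = t`, then `m` would be an integer in `(u, u + 1/2]`. -/
lemma card_large_ne_half (hT : 0 < T) {a m : ℕ} (hlt : t * L + u * T < a * L + m * T)
    (hle : a * L + m * T ≤ t * L + u * T + T / 2) : a ≠ t := by
  rintro rfl
  have hum : (u : ℝ) < m := lt_of_mul_lt_mul_right (by linarith) hT.le
  have hmu : (m : ℝ) ≤ u + 1 / 2 := le_of_mul_le_mul_right (by linarith) hT
  have : (u : ℝ) + 1 ≤ m := by exact_mod_cast (show u < m by exact_mod_cast hum)
  linarith

lemma exists_few_large_many_small (hL : 0 ≤ L) (hT : 0 < T) {a₁ a₂ m₁ m₂ : ℕ}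
    (ha : a₁ + a₂ = t + t) (hm : m₁ + m₂ = u + u) (hfull : t * L + u * T < a₁ * L + m₁ * T)
    (hlocal : a₁ * L + m₁ * T ≤ a₂ * L + m₂ * T + T) :
    ((a₁ : ℝ) ≤ t - 1 ∧ (u : ℝ) - 1 / 2 + L / T ≤ m₁) ∨
      ((a₂ : ℝ) ≤ t - 1 ∧ (u : ℝ) - 1 / 2 + L / T ≤ m₂) := by
  have hsum : (a₁ * L + m₁ * T) + (a₂ * L + m₂ * T) = 2 * (t * L + u * T) := by
    have haR : (a₁ : ℝ) + a₂ = t + t := by exact_mod_cast ha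
    have hmR : (m₁ : ℝ) + m₂ = u + u := by exact_mod_cast hm
    linear_combination L * haR + T * hmR
  have hne := card_large_ne_half hT hfull (by linarith)
  rcases Nat.lt_or_gt_of_ne hne with h | h
  · have ha₁ : (a₁ : ℝ) ≤ t - 1 := by
      have : (a₁ : ℝ) + 1 ≤ t := by exact_mod_cast h
      linarith
    exact Or.inl ⟨ha₁, half_sub_le_card_small hL hT ha₁ (by linarith)⟩
  · have ha₂ : (a₂ : ℝ) ≤ t - 1 := by
      have : (a₂ : ℝ) + 1 ≤ t := by exact_mod_cast (show a₂ + 1 ≤ t by omega)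
      linarith
    exact Or.inr ⟨ha₂, half_sub_le_card_small hL hT ha₂ (by linarith)⟩

end TwoMachines

theorem localOpt_unbalanced_machines
    (n s : ℕ) (ε : ℝ) (hn : Even n) (hs : Even s) (h2s : 2 ≤ s) (hsn : s < n)
    (hε0 : 0 < ε) (hε1 : ε < 1 / (2 * (s : ℝ) - 1))
    (x : Fin n → Bool) (hlo : IsLocalOpt (gProc n s ε) x)
    (hhalf : makespan (gProc n s ε) x > 1 / 2)
    (hsmall : ∃ b : Bool, load (gProc n s ε) x b = makespan (gProc n s ε) x ∧
        ∃ i : Fin n, x i = b ∧ s ≤ (i : ℕ)) :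
    ∃ b : Bool,
      ((Finset.univ.filter (fun i : Fin n => x i = b ∧ (i : ℕ) < s)).card : ℝ)
          ≤ (s : ℝ) / 2 - 1 ∧
      ((n : ℝ) - s - 1) / 2 +
          (1 / (2 * (s : ℝ) - 1) - ε / (2 * s)) /
            ((((s : ℝ) - 1) / ((n : ℝ) - s))
              * (1 / (2 * (s : ℝ) - 1) + ε / (2 * ((s : ℝ) - 1))))
        ≤ ((Finset.univ.filter (fun i : Fin n => x i = b ∧ s ≤ (i : ℕ))).card : ℝ) := by
  obtain ⟨b, hfull, i, rfl, hi⟩ := hsmall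
  obtain ⟨t, hst⟩ := hs
  obtain ⟨u, hnsu⟩ := (Nat.even_sub hsn.le).mpr (iff_of_true hn ⟨t, hst⟩)
  have hsR : (s : ℝ) = t + t := by exact_mod_cast hst
  have hnsR : (n : ℝ) - s = u + u := by rw [← Nat.cast_sub hsn.le]; exact_mod_cast hnsu
  have hL := gLarge_pos (by omega) hε0.le hε1
  have hT := gSmall_pos h2s hsn hε0.le
  have htotal : (t : ℝ) * gLarge s ε + u * gSmall n s ε = 1 / 2 := by
    linear_combination (gLarge_mul_add_gSmall_mul (ε := ε) h2s hsn) / 2 - gLarge s ε / 2 * hsR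
      - gSmall n s ε / 2 * hnsR
  have hlocal := hlo.load_le_load_not_add (by rwa [gProc_of_le ε hi]) hfull
  rw [gProc_of_le ε hi, load_gProc, load_gProc] at hlocal
  rw [← hfull, load_gProc] at hhalf
  have hcardLarge := card_filter_eq_add_card_filter_eq_not x (x i) (fun j : Fin n => (j : ℕ) < s)
  have hcardSmall := card_filter_eq_add_card_filter_eq_not x (x i) (fun j : Fin n => s ≤ (j : ℕ))
  rw [Fin.card_filter_val_lt, min_eq_right hsn.le] at hcardLarge
  rw [Fin.card_filter_le_val hsn.le, hnsu] at hcardSmall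
  have hs2 : (s : ℝ) / 2 - 1 = t - 1 := by rw [hsR]; ring
  have hn2 : ((n : ℝ) - s - 1) / 2 = u - 1 / 2 := by rw [hnsR]; ring
  rcases exists_few_large_many_small hL.le hT (hcardLarge.trans hst) hcardSmall (by linarith) hlocal with
    ⟨hfew, hmany⟩ | ⟨hfew, hmany⟩
  · exact ⟨x i, by rw [hs2]; exact hfew, by rw [hn2]; exact hmany⟩
  · exact ⟨!x i, by rw [hs2]; exact hfew, by rw [hn2]; exact hmany⟩
end

section
/- Let p₁ ≥ p₂ ≥ … ≥ pₙ > 0 be the processing times of a Partition instance with total processing time W, let x be a solution that is not a local optimum, and let v be a real with W/2 ≤ v < f(x) such that no local optimum y satisfies v < f(y) < f(x). Then there exists a job j assigned to the fuller machine of x such that moving only job j to the emptier machine strictly decreases the makespan and such that ∑_{i : p_i ≤ p_j} p_i ≥ f(x) − v. -/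
open Finset

lemma load_add_load {n : ℕ} (p : Fin n → ℝ) (x : Fin n → Bool) :
    load p x false + load p x true = ∑ i, p i := by
  classical
  rw [load, load, ← Finset.sum_filter_add_sum_filter_not Finset.univ (fun i => x i = false) p]
  congr 1
  apply Finset.sum_congr _ fun _ _ => rfl
  ext i
  simp

lemma load_le_makespan {n : ℕ} (p : Fin n → ℝ) (x : Fin n → Bool) (b : Bool) :
    load p x b ≤ makespan p x := by
  cases b
  · exact le_max_left _ _
  · exact le_max_right _ _

lemma makespan_eq_max {n : ℕ} (p : Fin n → ℝ) (x : Fin n → Bool) (b : Bool) :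
    makespan p x = max (load p x b) (load p x (!b)) := by
  cases b
  · rfl
  · exact max_comm _ _

lemma half_le_makespan {n : ℕ} (p : Fin n → ℝ) (x : Fin n → Bool) :
    (∑ i, p i) / 2 ≤ makespan p x := by
  have h := load_add_load p x
  have h1 : load p x false ≤ makespan p x := load_le_makespan p x false
  have h2 : load p x true ≤ makespan p x := load_le_makespan p x true
  linarith

lemma load_update {n : ℕ} (p : Fin n → ℝ) (x : Fin n → Bool) (j : Fin n) (b : Bool) :
    load p (Function.update x j (!x j)) b
      = load p x b + (if x j = b then -(p j) else p j) := by
  classical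
  have h : ∀ y : Fin n → Bool, load p y b = ∑ i, if y i = b then p i else 0 := by
    intro y; rw [load, Finset.sum_filter]
  rw [h, h]
  have hfun : (fun i => if Function.update x j (!x j) i = b then p i else 0)
      = Function.update (fun i => if x i = b then p i else 0) j
          (if (!x j) = b then p j else 0) := by
    funext i
    rcases eq_or_ne i j with rfl | hij
    · simp
    · simp [Function.update_of_ne hij]
  rw [hfun, Finset.sum_update_of_mem (Finset.mem_univ j)]
  rw [← Finset.add_sum_erase Finset.univ _ (Finset.mem_univ j)]
  rw [Finset.sdiff_singleton_eq_erase]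
  cases hx : x j <;> cases b <;> simp [hx] <;> ring

lemma improve_iff {n : ℕ} (p : Fin n → ℝ) (hpos : ∀ i, 0 < p i) (x : Fin n → Bool) (j : Fin n) :
    makespan p (Function.update x j (!x j)) < makespan p x ↔
      load p x (!x j) + p j < load p x (x j) := by
  have hp := hpos j
  have h1 : makespan p x = max (load p x (x j)) (load p x (!x j)) := makespan_eq_max p x (x j)
  have h2 : makespan p (Function.update x j (!x j))
      = max (load p x (x j) - p j) (load p x (!x j) + p j) := by
    rw [makespan_eq_max p _ (x j), load_update, load_update]
    have e1 : (if x j = x j then -(p j) else p j) = -(p j) := by simp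
    have e2 : (if x j = !x j then -(p j) else p j) = p j := by
      simp [Bool.eq_not_self]
    rw [e1, e2]
    ring_nf
  rw [h1, h2]
  constructor
  · intro h
    rcases le_or_gt (load p x (x j)) (load p x (!x j)) with hle | hlt
    · exfalso
      have := le_max_right (load p x (x j) - p j) (load p x (!x j) + p j)
      have hm : max (load p x (x j)) (load p x (!x j)) = load p x (!x j) := max_eq_right hle
      rw [hm] at h
      linarith
    · have hm : max (load p x (x j)) (load p x (!x j)) = load p x (x j) :=
        max_eq_left hlt.le
      rw [hm] at h
      have := le_max_right (load p x (x j) - p j) (load p x (!x j) + p j)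
      linarith
  · intro h
    have hm : max (load p x (x j)) (load p x (!x j)) = load p x (x j) :=
      max_eq_left (by linarith)
    rw [hm]
    apply max_lt <;> linarith

/-- If `x` is not a local optimum and no local optimum has makespan in `(v, f(x))` for
some `v ≥ W/2`, then some job `j` on the fuller machine of `x` can be moved alone to the
emptier machine to strictly improve the makespan, and the jobs no heavier than `j` have
total processing time at least `f(x) - v`. -/
theorem exists_large_improving_job
    (n : ℕ) (p : Fin n → ℝ) (hpos : ∀ i, 0 < p i)
    (hmono : ∀ i j : Fin n, i ≤ j → p j ≤ p i)
    (x : Fin n → Bool) (hx : ¬ IsLocalOpt p x)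
    (v : ℝ) (hv1 : (∑ i, p i) / 2 ≤ v) (hv2 : v < makespan p x)
    (hno : ∀ y : Fin n → Bool, IsLocalOpt p y →
        ¬ (v < makespan p y ∧ makespan p y < makespan p x)) :
    ∃ b : Bool, ∃ j : Fin n, load p x b = makespan p x ∧ x j = b ∧
      makespan p (Function.update x j (!x j)) < makespan p x ∧
      makespan p x - v ≤ ∑ i ∈ Finset.univ.filter (fun i => p i ≤ p j), p i := by
  classical
  have hex : ∃ j : Fin n, makespan p (Function.update x j (!x j)) < makespan p x := by
    rw [IsLocalOpt] at hx; push_neg at hx; exact hx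
  -- pick improving job of maximal weight
  obtain ⟨j, hjmem', hjmax'⟩ :=
    Finset.exists_max_image
      (Finset.univ.filter (fun j => makespan p (Function.update x j (!x j)) < makespan p x)) p
      (by obtain ⟨j, hj⟩ := hex; exact ⟨j, by simp [hj]⟩)
  have hjmem : makespan p (Function.update x j (!x j)) < makespan p x := by
    simpa using hjmem'
  have hjmax : ∀ i, makespan p (Function.update x i (!x i)) < makespan p x → p i ≤ p j := by
    intro i hi; exact hjmax' i (by simp [hi])
  set b := x j with hbdef
  have himp : load p x (!b) + p j < load p x b := (improve_iff p hpos x j).mp hjmem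
  have hb : load p x b = makespan p x := by
    rw [makespan_eq_max p x b]
    have := hpos j
    exact (max_eq_left (by linarith)).symm
  have hsumx : load p x b + load p x (!b) = ∑ i, p i := by
    cases hbb : b
    · simpa [hbb] using load_add_load p x
    · have := load_add_load p x; simp only [hbb, Bool.not_true]; linarith
  have hfx : v < load p x b := by rw [hb]; exact hv2
  -- the restricted solution space
  set T : Finset (Fin n → Bool) :=
    Finset.univ.filter (fun y => (∀ i, p j < p i → y i = x i) ∧ makespan p y < makespan p x)
    with hTdef
  have hTne : T.Nonempty := by
    refine ⟨Function.update x j (!x j), ?_⟩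
    rw [hTdef, Finset.mem_filter]
    refine ⟨Finset.mem_univ _, fun i hi => ?_, hjmem⟩
    exact Function.update_of_ne (by rintro rfl; exact lt_irrefl _ hi) _ _
  obtain ⟨y, hyT, hymin⟩ := Finset.exists_min_image T (makespan p) hTne
  rw [hTdef, Finset.mem_filter] at hyT
  obtain ⟨-, hyagree, hylt⟩ := hyT
  have hymin' : ∀ z, (∀ i, p j < p i → z i = x i) → makespan p z < makespan p x →
      makespan p y ≤ makespan p z := by
    intro z h1 h2
    exact hymin z (by rw [hTdef, Finset.mem_filter]; exact ⟨Finset.mem_univ _, h1, h2⟩)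
  have hsumy : load p y b + load p y (!b) = ∑ i, p i := by
    cases hbb : b
    · simpa [hbb] using load_add_load p y
    · have := load_add_load p y; simp only [hbb, Bool.not_true]; linarith
  -- y is a local optimum
  have hloc : IsLocalOpt p y := by
    intro i hi
    have hii := (improve_iff p hpos y i).mp hi
    by_cases hsmall : p i ≤ p j
    · -- small jobs can't improve by minimality of y in T
      have h1 : ∀ k, p j < p k → Function.update y i (!y i) k = x k := by
        intro k hk
        rw [Function.update_of_ne (by rintro rfl; exact absurd hk (not_lt.mpr hsmall))]
        exact hyagree k hk
      have := hymin' _ h1 (hi.trans hylt)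
      linarith
    · push_neg at hsmall
      have hyi : y i = x i := hyagree i hsmall
      by_cases hc : x i = b
      · -- heavy job improving on machine b : it would have been improving in x
        rw [hyi, hc] at hii
        have h2 : load p y b ≤ makespan p y := load_le_makespan p y b
        have : makespan p (Function.update x i (!x i)) < makespan p x := by
          rw [improve_iff p hpos x i, hc]
          linarith
        exact absurd (hjmax i this) (not_le.mpr hsmall)
      · -- heavy job improving on machine !b : derive a contradiction
        have hxi : x i = !b := by
          cases hbb : b <;> cases hxx : x i <;> simp_all
        rw [hyi, hxi, Bool.not_not] at hii
        -- every job on machine !b in y is heavy, hence fixed as in x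
        have hheavy : ∀ k, y k = !b → p j < p k := by
          intro k hk
          by_contra hks
          push_neg at hks
          have himpk : makespan p (Function.update y k (!y k)) < makespan p y := by
            rw [improve_iff p hpos y k, hk, Bool.not_not]
            linarith
          have h1 : ∀ m, p j < p m → Function.update y k (!y k) m = x m := by
            intro m hm
            rw [Function.update_of_ne (by rintro rfl; exact absurd hm (not_lt.mpr hks))]
            exact hyagree m hm
          have := hymin' _ h1 (himpk.trans hylt)
          linarith
        have hsub : Finset.univ.filter (fun k => y k = !b) ⊆
            Finset.univ.filter (fun k => x k = !b) := by
          intro k hk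
          rw [Finset.mem_filter] at hk ⊢
          exact ⟨Finset.mem_univ _, by rw [← hyagree k (hheavy k hk.2)]; exact hk.2⟩
        have h3 : load p y (!b) ≤ load p x (!b) :=
          Finset.sum_le_sum_of_subset_of_nonneg hsub (fun k _ _ => (hpos k).le)
        have h4 : (∑ i, p i) / 2 ≤ makespan p y := half_le_makespan p y
        have h5 : makespan p y = load p y (!b) := by
          rw [makespan_eq_max p y b]
          exact max_eq_right (by have := hpos i; linarith)
        linarith
  -- y is a local optimum below f(x), hence its makespan is at most v
  have hyv : makespan p y ≤ v := by
    by_contra h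
    push_neg at h
    exact hno y hloc ⟨h, hylt⟩
  refine ⟨b, j, hb, rfl, hjmem, ?_⟩
  -- split the fuller machine's load into small and heavy jobs
  have hsplit : load p x b =
      (∑ i ∈ (Finset.univ.filter (fun i => x i = b)).filter (fun i => p i ≤ p j), p i)
      + ∑ i ∈ (Finset.univ.filter (fun i => x i = b)).filter (fun i => ¬ p i ≤ p j), p i := by
    rw [load, ← Finset.sum_filter_add_sum_filter_not (Finset.univ.filter (fun i => x i = b))
      (fun i => p i ≤ p j) p]
  have hs1 : (∑ i ∈ (Finset.univ.filter (fun i => x i = b)).filter (fun i => p i ≤ p j), p i)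
      ≤ ∑ i ∈ Finset.univ.filter (fun i => p i ≤ p j), p i := by
    apply Finset.sum_le_sum_of_subset_of_nonneg _ (fun k _ _ => (hpos k).le)
    intro k hk
    rw [Finset.mem_filter] at hk ⊢
    exact ⟨Finset.mem_univ _, hk.2⟩
  have hs2 : (∑ i ∈ (Finset.univ.filter (fun i => x i = b)).filter (fun i => ¬ p i ≤ p j), p i)
      ≤ load p y b := by
    rw [load]
    apply Finset.sum_le_sum_of_subset_of_nonneg _ (fun k _ _ => (hpos k).le)
    intro k hk
    simp only [Finset.mem_filter, Finset.mem_univ, true_and] at hk ⊢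
    rw [hyagree k (not_le.mp hk.2)]
    exact hk.1
  have hylb : load p y b ≤ makespan p y := load_le_makespan p y b
  linarith [hb]
end
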